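/- Let a^E(u,v) = ∫_E κ ∇u·∇v̄ with κ constant on E, and let S^E be a symmetric semi-positive sesquilinear form on V_h^E satisfying a₀ a^E(w,w) ≤ S^E(w,w) ≤ a₁ a^E(w,w) for all w ∈ V_h^E ∩ ker(Π^{∇,E}). Define a_h^E(u,v) = a^E(Π^{∇,E}u, Π^{∇,E}v) + S^E(u − Π^{∇,E}u, v − Π^{∇,E}v). Then a_h^E is consistent (a_h^E(p, v) = a^E(p,v) for all p ∈ P₁(E), v ∈ V_h^E) and stable: min{1,a₀} a^E(v,v) ≤ a_h^E(v,v) ≤ max{1,a₁} a^E(v,v) for all v ∈ V_h^E. -/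

import Mathlib

open scoped ComplexConjugate

/-!
Write `v = Πv + (v - Πv)`. Orthogonality of the energy projection kills the cross terms, so
`a(v,v) = a(Πv,Πv) + a(v - Πv, v - Πv)` (Pythagoras), while `a_h(v,v)` is the same sum with the
second term replaced by `S(v - Πv, v - Πv)`. Since `v - Πv ∈ ker Π`, that term is comparable to
`a(v - Πv, v - Πv)` with constants `a₀, a₁`, and stability follows termwise. Consistency holds
because `p - Πp = 0` for `p ∈ P₁` and `a(p, v - Πv) = 0`.
-/

section SesquilinearForm

variable {V : Type*} [AddCommGroup V]

theorem apply_add_right_of_conj_symm (a : V → V → ℂ)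
    (ha_herm : ∀ v w, a w v = conj (a v w)) (ha_add : ∀ x y z, a (x + y) z = a x z + a y z)
    (x y z : V) : a z (x + y) = a z x + a z y := by
  rw [ha_herm, ha_add, map_add, ← ha_herm, ← ha_herm]

theorem apply_add_add_self_of_orthogonal (a : V → V → ℂ)
    (ha_herm : ∀ v w, a w v = conj (a v w)) (ha_add : ∀ x y z, a (x + y) z = a x z + a y z)
    {p w : V} (hwp : a w p = 0) : a (p + w) (p + w) = a p p + a w w := by
  have hpw : a p w = 0 := by rw [ha_herm, hwp, map_zero]
  simp only [ha_add, apply_add_right_of_conj_symm a ha_herm ha_add, hpw, hwp]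
  ring

end SesquilinearForm

theorem LinearMap.apply_sub_apply_self_eq_zero {R V : Type*} [Ring R] [AddCommGroup V]
    [Module R V] (Proj : V →ₗ[R] V) (hidem : ∀ v, Proj (Proj v) = Proj v) (v : V) :
    Proj (v - Proj v) = 0 := by
  rw [map_sub, hidem, sub_self]

theorem min_one_mul_add_le_add {x y z c : ℝ} (hx : 0 ≤ x) (hy : 0 ≤ y) (h : c * y ≤ z) :
    min 1 c * (x + y) ≤ x + z := by
  have h₁ : min 1 c * x ≤ x := mul_le_of_le_one_left hx (min_le_left _ _)
  have h₂ : min 1 c * y ≤ c * y := mul_le_mul_of_nonneg_right (min_le_right _ _) hy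
  linarith

theorem add_le_max_one_mul_add {x y z c : ℝ} (hx : 0 ≤ x) (hy : 0 ≤ y) (h : z ≤ c * y) :
    x + z ≤ max 1 c * (x + y) := by
  have h₁ : x ≤ max 1 c * x := le_mul_of_one_le_left hx (le_max_left _ _)
  have h₂ : c * y ≤ max 1 c * y := mul_le_mul_of_nonneg_right (le_max_right _ _) hy
  linarith

theorem stmt18_general
    {V : Type*} [AddCommGroup V] [Module ℂ V]
    (P1 : Submodule ℂ V)
    (aE SE : V → V → ℂ)
    (Proj : V →ₗ[ℂ] V)
    (hProjmem : ∀ v, Proj v ∈ P1)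
    (hProjid : ∀ p ∈ P1, Proj p = p)
    -- `a` is Hermitian, additive, with real nonnegative diagonal
    (haHerm : ∀ v w, aE w v = conj (aE v w))
    (haadd₁ : ∀ x y z, aE (x + y) z = aE x z + aE y z)
    (hapos : ∀ v, 0 ≤ (aE v v).re)
    -- Pythagorean orthogonality of the energy projection
    (haortho : ∀ v, ∀ p ∈ P1, aE (v - Proj v) p = 0)
    -- `S` is symmetric, additive, semi-positive
    (hSadd₁ : ∀ x y z, SE (x + y) z = SE x z + SE y z)
    -- stability bounds on the kernel of the projection
    (a₀ a₁ : ℝ)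
    (hstab : ∀ w : V, Proj w = 0 →
      a₀ * (aE w w).re ≤ (SE w w).re ∧ (SE w w).re ≤ a₁ * (aE w w).re) :
    (∀ p ∈ P1, ∀ v : V,
        aE (Proj p) (Proj v) + SE (p - Proj p) (v - Proj v) = aE p v) ∧
    (∀ v : V,
        min 1 a₀ * (aE v v).re ≤
          (aE (Proj v) (Proj v) + SE (v - Proj v) (v - Proj v)).re ∧
        (aE (Proj v) (Proj v) + SE (v - Proj v) (v - Proj v)).re ≤
          max 1 a₁ * (aE v v).re) := by
  have hdecomp (v : V) : Proj v + (v - Proj v) = v := add_sub_cancel _ _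
  have hSzero (z : V) : SE 0 z = 0 := (AddMonoidHom.mk' (SE · z) (hSadd₁ · · z)).map_zero
  have horthoRight (v p : V) (hp : p ∈ P1) : aE p (v - Proj v) = 0 := by
    rw [haHerm, haortho v p hp, map_zero]
  have hpyth (v : V) :
      aE v v = aE (Proj v) (Proj v) + aE (v - Proj v) (v - Proj v) := by
    conv_lhs => rw [← hdecomp v]
    exact apply_add_add_self_of_orthogonal aE haHerm haadd₁ (haortho v _ (hProjmem v))
  refine ⟨fun p hp v ↦ ?_, fun v ↦ ?_⟩
  · rw [hProjid p hp, sub_self, hSzero, add_zero]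
    calc aE p (Proj v) = aE p (Proj v) + aE p (v - Proj v) := by
          rw [horthoRight v p hp, add_zero]
      _ = aE p v := by rw [← apply_add_right_of_conj_symm aE haHerm haadd₁, hdecomp]
  · obtain ⟨hlower, hupper⟩ :=
      hstab _ (Proj.apply_sub_apply_self_eq_zero (fun v ↦ hProjid _ (hProjmem v)) v)
    rw [hpyth v, Complex.add_re, Complex.add_re]
    exact ⟨min_one_mul_add_le_add (hapos _) (hapos _) hlower,
      add_le_max_one_mul_add (hapos _) (hapos _) hupper⟩

/-- Consistency and stability of the VEM discrete form
`a_h(u,v) = a(Πu, Πv) + S(u − Πu, v − Πv)`, where `Π` is the energy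
projection onto the polynomial subspace `P₁` and `S` is any symmetric
semi-positive stabilizing form equivalent to `a` on `ker Π`:
`a_h(p,v) = a(p,v)` for `p ∈ P₁`, and
`min{1,a₀} a(v,v) ≤ a_h(v,v) ≤ max{1,a₁} a(v,v)`. -/
theorem stmt18
    {V : Type*} [AddCommGroup V] [Module ℂ V]
    (P1 : Submodule ℂ V)
    (aE SE : V → V → ℂ)
    (Proj : V →ₗ[ℂ] V)
    (hProjmem : ∀ v, Proj v ∈ P1)
    (hProjid : ∀ p ∈ P1, Proj p = p)
    -- `a` is Hermitian, additive, with real nonnegative diagonal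
    (haHerm : ∀ v w, aE w v = conj (aE v w))
    (haadd₁ : ∀ x y z, aE (x + y) z = aE x z + aE y z)
    (hapos : ∀ v, 0 ≤ (aE v v).re)
    -- Pythagorean orthogonality of the energy projection
    (haortho : ∀ v, ∀ p ∈ P1, aE (v - Proj v) p = 0)
    -- `S` is symmetric, additive, semi-positive
    (hSsymm : ∀ v w, SE w v = conj (SE v w))
    (hSadd₁ : ∀ x y z, SE (x + y) z = SE x z + SE y z)
    (hSpos : ∀ v, 0 ≤ (SE v v).re)
    -- stability bounds on the kernel of the projection
    (a₀ a₁ : ℝ) (ha₀ : 0 < a₀)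
    (hstab : ∀ w : V, Proj w = 0 →
      a₀ * (aE w w).re ≤ (SE w w).re ∧ (SE w w).re ≤ a₁ * (aE w w).re) :
    (∀ p ∈ P1, ∀ v : V,
        aE (Proj p) (Proj v) + SE (p - Proj p) (v - Proj v) = aE p v) ∧
    (∀ v : V,
        min 1 a₀ * (aE v v).re ≤
          (aE (Proj v) (Proj v) + SE (v - Proj v) (v - Proj v)).re ∧
        (aE (Proj v) (Proj v) + SE (v - Proj v) (v - Proj v)).re ≤
          max 1 a₁ * (aE v v).re) :=
  stmt18_general P1 aE SE Proj hProjmem hProjid haHerm haadd₁ hapos haortho hSadd₁ a₀ a₁ hstab
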